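/- Call a pair (a, b) ∈ ℤ × ℤ primary if either (b ≡ 0 (mod 4) and a ≡ 1 (mod 4)) or (b ≡ 2 (mod 4) and a ≡ 3 (mod 4)). For every n ≥ 1, the coefficient of X^n in the formal power series X ∏_{m=1}^∞ (1−X^{4m})^2 (1−X^{8m})^2 (the q-expansion of η(4z)^2 η(8z)^2) equals the finite sum Σ (a + bi), taken over all primary pairs (a, b) with a^2 + b^2 = n. (In particular this complex sum is a rational integer.) -/

import Mathlib

/-!
With `s = X⁴` the product is `(s;s)² (s²;s²)²`, and `(s;s) = (s;s²)(s²;s²)`, so it factors as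
`(s;s²)² (s²;s²) · (s²;s²)³`. Gauss's identity turns the first factor into
`∑_{k ∈ ℤ} (-1)^k s^{k²}` and Jacobi's identity the second into
`∑_{j ≥ 0} (-1)^j (2j+1) s^{j(j+1)}`. After multiplying by `X` the exponent is `(2j+1)² + (2k)²`,
and `(j, k) ↦ ((-1)^{j+k} (2j+1), 2k)` is a bijection onto the primary pairs that carries the
coefficient to `a`; the imaginary parts cancel under `b ↦ -b`.

Both identities come from finite versions with Gaussian binomials `[2N, m]_q`, proved by one
three-term recursion in `N`. They pass to the limit modulo `X^{n+1}`: there `s` is nilpotent,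
`[2N, m]_q (q;q)_M² = (q;q)_M` for `M ≤ m ≤ 2N - M`, and every other term vanishes.
-/

def IsPrimaryPair (a b : ℤ) : Prop :=
  (b ≡ 0 [ZMOD 4] ∧ a ≡ 1 [ZMOD 4]) ∨ (b ≡ 2 [ZMOD 4] ∧ a ≡ 3 [ZMOD 4])

instance : ∀ a b : ℤ, Decidable (IsPrimaryPair a b) := fun a b => by
  unfold IsPrimaryPair; infer_instance

open Finset

variable {A : Type*} [CommRing A]

def gaussBinom (q : A) : ℕ → ℕ → A
  | _, 0 => 1
  | 0, _ + 1 => 0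
  | n + 1, k + 1 => gaussBinom q n (k + 1) + q ^ (n - k) * gaussBinom q n k

/-- The q-Pochhammer symbol `(q;q)_n`. -/
def qPochhammer (q : A) (n : ℕ) : A := ∏ i ∈ range n, (1 - q ^ (i + 1))

lemma qPochhammer_succ (q : A) (n : ℕ) :
    qPochhammer q (n + 1) = qPochhammer q n * (1 - q ^ (n + 1)) :=
  prod_range_succ _ n

namespace gaussBinom

variable (q : A)

@[simp] lemma zero_right (n : ℕ) : gaussBinom q n 0 = 1 := by cases n <;> rfl

lemma succ_succ (n k : ℕ) :
    gaussBinom q (n + 1) (k + 1) = gaussBinom q n (k + 1) + q ^ (n - k) * gaussBinom q n k :=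
  rfl

lemma eq_zero_of_lt {n k : ℕ} (h : n < k) : gaussBinom q n k = 0 := by
  induction n generalizing k with
  | zero => obtain ⟨k, rfl⟩ : ∃ k', k = k' + 1 := ⟨k - 1, by omega⟩; rfl
  | succ n ih =>
    obtain ⟨k, rfl⟩ : ∃ k', k = k' + 1 := ⟨k - 1, by omega⟩
    rw [succ_succ, ih (by omega), ih (by omega), mul_zero, add_zero]

@[simp] lemma self (n : ℕ) : gaussBinom q n n = 1 := by
  induction n with
  | zero => rfl
  | succ n ih => rw [succ_succ, eq_zero_of_lt q (Nat.lt_succ_self n), ih, Nat.sub_self]; simp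

lemma succ_succ' (n k : ℕ) :
    gaussBinom q (n + 1) (k + 1) = q ^ (k + 1) * gaussBinom q n (k + 1) + gaussBinom q n k := by
  induction n generalizing k with
  | zero => cases k <;> simp [succ_succ, eq_zero_of_lt]
  | succ n ih =>
    rcases k with _ | k
    · have := ih 0
      simp only [zero_right, succ_succ, Nat.sub_zero, mul_one] at this ⊢
      linear_combination this
    rcases le_or_gt (k + 1) n with hk | hk
    · have e₁ : q ^ (n - k) * q ^ (k + 1) = q ^ (n + 1) := by rw [← pow_add]; congr 1; omega
      have e₂ : q ^ (k + 1 + 1) * q ^ (n - (k + 1)) = q ^ (n + 1) := by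
        rw [← pow_add]; congr 1; omega
      have h₁ := succ_succ q (n + 1) (k + 1)
      rw [Nat.add_sub_add_right] at h₁
      linear_combination h₁ + ih (k + 1) - q ^ (k + 1 + 1) * succ_succ q n (k + 1)
        + q ^ (n - k) * ih k - succ_succ q n k + gaussBinom q n (k + 1) * (e₁ - e₂)
    · rcases (show k = n ∨ n < k by omega) with rfl | hk
      · simp [eq_zero_of_lt]
      · simp [eq_zero_of_lt q (show n + 1 < k + 1 by omega),
          eq_zero_of_lt q (show n + 1 < k + 1 + 1 by omega),
          eq_zero_of_lt q (show n + 1 + 1 < k + 1 + 1 by omega)]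

lemma add_two_add_two (n m : ℕ) :
    gaussBinom q (n + 2) (m + 2) = q ^ (m + 2) * gaussBinom q n (m + 2)
      + (1 + q ^ (n + 1)) * gaussBinom q n (m + 1) + q ^ (n - m) * gaussBinom q n m := by
  rcases le_or_gt m n with hm | hm
  · have e : q ^ (n - m) * q ^ (m + 1) = q ^ (n + 1) := by rw [← pow_add]; congr 1; omega
    have h := succ_succ q (n + 1) (m + 1)
    rw [Nat.add_sub_add_right] at h
    linear_combination h + succ_succ' q n (m + 1) + q ^ (n - m) * succ_succ' q n m
      + gaussBinom q n (m + 1) * e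
  · simp [eq_zero_of_lt q hm, eq_zero_of_lt q (show n < m + 1 by omega),
      eq_zero_of_lt q (show n < m + 2 by omega), eq_zero_of_lt q (show n + 2 < m + 2 by omega)]

lemma add_two_one (n : ℕ) :
    gaussBinom q (n + 2) 1 = q * gaussBinom q n 1 + (1 + q ^ (n + 1)) := by
  have h := succ_succ q (n + 1) 0
  have h' := succ_succ' q n 0
  simp only [zero_right, Nat.sub_zero, mul_one, zero_add, pow_one] at h h'
  linear_combination h + h'

lemma two_one : gaussBinom q 2 1 = 1 + q := by
  simpa [add_comm, eq_zero_of_lt] using add_two_one q 0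

lemma mul_qPochhammer_mul_qPochhammer {n k : ℕ} (hk : k ≤ n) :
    gaussBinom q n k * qPochhammer q k * qPochhammer q (n - k) = qPochhammer q n := by
  induction n generalizing k with
  | zero => obtain rfl : k = 0 := by omega
            simp [qPochhammer]
  | succ n ih =>
    rcases k with _ | k
    · simp [qPochhammer]
    rcases (show k = n ∨ k < n by omega) with rfl | hk
    · simp [qPochhammer]
    have e₁ : qPochhammer q (n - k) = qPochhammer q (n - (k + 1)) * (1 - q ^ (n - k)) := by
      rw [show n - k = n - (k + 1) + 1 by omega, qPochhammer_succ]
    have e₂ : q ^ (n - k) * q ^ (k + 1) = q ^ (n + 1) := by rw [← pow_add]; congr 1; omega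
    rw [Nat.add_sub_add_right, succ_succ]
    linear_combination (1 - q ^ (n - k)) * ih (k := k + 1) (by omega)
      + q ^ (n - k) * (1 - q ^ (k + 1)) * ih (k := k) (by omega)
      + gaussBinom q n (k + 1) * qPochhammer q (k + 1) * e₁
      + q ^ (n - k) * gaussBinom q n k * qPochhammer q (n - k) * qPochhammer_succ q k
      - qPochhammer_succ q n - qPochhammer q n * e₂

end gaussBinom

/-- With `c m = (-1)^m` and `w N m = s^((m-N)^2)`, `q = s²`, this is a finite form of
`∑_{k ∈ ℤ} (-1)^k s^{k²}`; `w N m = s^((m-N)(m-N+1))` gives the Jacobi series instead. -/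
def thetaSum (q : A) (c : ℕ → A) (w : ℕ → ℕ → A) (N : ℕ) : A :=
  ∑ m ∈ range (2 * N + 1), c m * gaussBinom q (2 * N) m * w N m

section thetaSum

variable {q : A} {c : ℕ → A} {w : ℕ → ℕ → A} {N : ℕ}

lemma thetaSum_eq_sum_range {L : ℕ} (hL : 2 * N + 1 ≤ L) :
    thetaSum q c w N = ∑ m ∈ range L, c m * gaussBinom q (2 * N) m * w N m :=
  sum_subset (range_subset_range.2 hL) fun m _ hm => by
    rw [gaussBinom.eq_zero_of_lt q (by simpa using hm), mul_zero, zero_mul]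

theorem thetaSum_succ {α γ : A} (hα : ∀ m, w (N + 1) m * q ^ m = α * w N m)
    (hw : ∀ m, w (N + 1) (m + 1) = w N m)
    (hγ : ∀ m ≤ 2 * N, w (N + 1) (m + 2) * q ^ (2 * N - m) = γ * w N m) :
    thetaSum q c w (N + 1) = α * thetaSum q c w N
      + (1 + q ^ (2 * N + 1)) * thetaSum q (fun m => c (m + 1)) w N
      + γ * thetaSum q (fun m => c (m + 2)) w N := by
  have hterm : ∀ m ∈ range (2 * N + 1),
      c (m + 2) * gaussBinom q (2 * N + 2) (m + 2) * w (N + 1) (m + 2)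
        = α * (c (m + 2) * gaussBinom q (2 * N) (m + 2) * w N (m + 2))
          + (1 + q ^ (2 * N + 1)) * (c (m + 2) * gaussBinom q (2 * N) (m + 1) * w N (m + 1))
          + γ * (c (m + 2) * gaussBinom q (2 * N) m * w N m) := by
    intro m hm
    rw [gaussBinom.add_two_add_two, ← hw (m + 1)]
    linear_combination c (m + 2) * gaussBinom q (2 * N) (m + 2) * hα (m + 2)
      + c (m + 2) * gaussBinom q (2 * N) m * hγ m (by simpa [Nat.lt_succ_iff] using hm)
  have h₀ := thetaSum_eq_sum_range (q := q) (c := c) (w := w) (N := N) (L := 2 * N + 1 + 1 + 1)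
    (by omega)
  have h₁ := thetaSum_eq_sum_range (q := q) (c := fun m => c (m + 1)) (w := w) (N := N)
    (L := 2 * N + 1 + 1) (by omega)
  rw [sum_range_succ', sum_range_succ'] at h₀
  rw [sum_range_succ'] at h₁
  unfold thetaSum
  rw [show 2 * (N + 1) + 1 = 2 * N + 1 + 1 + 1 by ring, show 2 * (N + 1) = 2 * N + 2 by ring,
    sum_range_succ', sum_range_succ', sum_congr rfl hterm, sum_add_distrib, sum_add_distrib,
    ← mul_sum, ← mul_sum, ← mul_sum, gaussBinom.add_two_one]
  unfold thetaSum at h₀ h₁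
  simp only [gaussBinom.zero_right, zero_add, mul_one, Nat.add_assoc, Nat.reduceAdd, hw 0]
    at h₀ h₁ ⊢
  have h₂ : w (N + 1) 0 = α * w N 0 := by simpa using hα 0
  have h₃ := hα 1
  rw [hw 0, pow_one] at h₃
  linear_combination -α * h₀ - (1 + q ^ (2 * N + 1)) * h₁ + c 0 * h₂
    + c 1 * gaussBinom q (2 * N) 1 * h₃

end thetaSum

lemma thetaSum_eq_linear_comb {q a b : A} {c c₁ c₂ : ℕ → A} (w : ℕ → ℕ → A) (N : ℕ)
    (h : ∀ m, c m = a * c₁ m + b * c₂ m) :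
    thetaSum q c w N = a * thetaSum q c₁ w N + b * thetaSum q c₂ w N := by
  simp only [thetaSum, mul_sum, ← sum_add_distrib]
  exact sum_congr rfl fun m _ => by rw [h]; ring

def jacobiExp (N m : ℕ) : ℕ := (((m : ℤ) - N) * ((m : ℤ) - N + 1)).toNat

def gaussExp (N m : ℕ) : ℕ := ((m : ℤ) - N).natAbs ^ 2

lemma natCast_jacobiExp (N m : ℕ) : (jacobiExp N m : ℤ) = ((m : ℤ) - N) * ((m : ℤ) - N + 1) :=
  Int.toNat_of_nonneg <| by rcases le_or_gt 0 ((m : ℤ) - N) with h | h <;> nlinarith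

lemma natCast_gaussExp (N m : ℕ) : (gaussExp N m : ℤ) = ((m : ℤ) - N) ^ 2 := by
  simp [gaussExp]

lemma jacobiExp_succ_add (N m : ℕ) : jacobiExp (N + 1) m + 2 * m = 2 * N + jacobiExp N m := by
  apply Nat.cast_injective (R := ℤ); push_cast [natCast_jacobiExp]; ring

lemma jacobiExp_succ_succ (N m : ℕ) : jacobiExp (N + 1) (m + 1) = jacobiExp N m := by
  apply Nat.cast_injective (R := ℤ); push_cast [natCast_jacobiExp]; ring

lemma jacobiExp_succ_add_two {N m : ℕ} (hm : m ≤ 2 * N) :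
    jacobiExp (N + 1) (m + 2) + 2 * (2 * N - m) = (2 * N + 2) + jacobiExp N m := by
  apply Nat.cast_injective (R := ℤ); push_cast [natCast_jacobiExp, hm]; ring

lemma gaussExp_succ_add (N m : ℕ) : gaussExp (N + 1) m + 2 * m = (2 * N + 1) + gaussExp N m := by
  apply Nat.cast_injective (R := ℤ); push_cast [natCast_gaussExp]; ring

lemma gaussExp_succ_succ (N m : ℕ) : gaussExp (N + 1) (m + 1) = gaussExp N m := by
  apply Nat.cast_injective (R := ℤ); push_cast [natCast_gaussExp]; ring

lemma gaussExp_succ_add_two {N m : ℕ} (hm : m ≤ 2 * N) :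
    gaussExp (N + 1) (m + 2) + 2 * (2 * N - m) = (2 * N + 1) + gaussExp N m := by
  apply Nat.cast_injective (R := ℤ); push_cast [natCast_gaussExp, hm]; ring

section FiniteIdentities

variable (s : A)

lemma pow_mul_sq_pow {a b c d : ℕ} (h : a + 2 * b = c + d) :
    s ^ a * (s ^ 2) ^ b = s ^ c * s ^ d := by
  rw [← pow_mul, ← pow_add, ← pow_add, h]

lemma thetaSum_jacobiExp_succ (c : ℕ → A) (N : ℕ) :
    thetaSum (s ^ 2) c (fun N m => s ^ jacobiExp N m) (N + 1)
      = s ^ (2 * N) * thetaSum (s ^ 2) c (fun N m => s ^ jacobiExp N m) N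
        + (1 + s ^ (4 * N + 2))
          * thetaSum (s ^ 2) (fun m => c (m + 1)) (fun N m => s ^ jacobiExp N m) N
        + s ^ (2 * N + 2)
          * thetaSum (s ^ 2) (fun m => c (m + 2)) (fun N m => s ^ jacobiExp N m) N := by
  rw [show s ^ (4 * N + 2) = (s ^ 2) ^ (2 * N + 1) by ring]
  exact thetaSum_succ (w := fun N m => s ^ jacobiExp N m)
    (fun m => pow_mul_sq_pow s (jacobiExp_succ_add N m))
    (fun m => by simp only [jacobiExp_succ_succ])
    (fun m hm => pow_mul_sq_pow s (jacobiExp_succ_add_two hm))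

lemma thetaSum_gaussExp_succ (c : ℕ → A) (N : ℕ) :
    thetaSum (s ^ 2) c (fun N m => s ^ gaussExp N m) (N + 1)
      = s ^ (2 * N + 1) * thetaSum (s ^ 2) c (fun N m => s ^ gaussExp N m) N
        + (1 + s ^ (4 * N + 2))
          * thetaSum (s ^ 2) (fun m => c (m + 1)) (fun N m => s ^ gaussExp N m) N
        + s ^ (2 * N + 1)
          * thetaSum (s ^ 2) (fun m => c (m + 2)) (fun N m => s ^ gaussExp N m) N := by
  rw [show s ^ (4 * N + 2) = (s ^ 2) ^ (2 * N + 1) by ring]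
  exact thetaSum_succ (w := fun N m => s ^ gaussExp N m)
    (fun m => pow_mul_sq_pow s (gaussExp_succ_add N m))
    (fun m => by simp only [gaussExp_succ_succ])
    (fun m hm => pow_mul_sq_pow s (gaussExp_succ_add_two hm))

theorem thetaSum_neg_one_pow_jacobiExp_eq_zero {N : ℕ} (hN : 0 < N) :
    thetaSum (s ^ 2) (fun m => (-1) ^ m) (fun N m => s ^ jacobiExp N m) N = 0 := by
  induction N, hN using Nat.le_induction with
  | base => simp [thetaSum, sum_range_succ, gaussBinom.two_one, jacobiExp]
  | succ N _ ih =>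
    have h₁ := thetaSum_eq_linear_comb (c := fun m => (-1 : A) ^ (m + 1)) (a := -1) (b := 0)
      (c₁ := fun m => (-1) ^ m) (c₂ := fun m => (-1) ^ m) (fun N m => s ^ jacobiExp N m) N
      (q := s ^ 2) fun m => by ring
    have h₂ := thetaSum_eq_linear_comb (c := fun m => (-1 : A) ^ (m + 2)) (a := 1) (b := 0)
      (c₁ := fun m => (-1) ^ m) (c₂ := fun m => (-1) ^ m) (fun N m => s ^ jacobiExp N m) N
      (q := s ^ 2) fun m => by ring
    rw [thetaSum_jacobiExp_succ, h₁, h₂, ih]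
    ring

theorem thetaSum_neg_one_pow_mul_jacobiExp {N : ℕ} (hN : 0 < N) :
    thetaSum (s ^ 2) (fun m => (-1) ^ m * m) (fun N m => s ^ jacobiExp N m) N
      = (-1) ^ N * qPochhammer (s ^ 2) N * qPochhammer (s ^ 2) (N - 1) := by
  induction N, hN using Nat.le_induction with
  | base => simp [thetaSum, sum_range_succ, gaussBinom.two_one, jacobiExp, qPochhammer]; ring
  | succ N hN ih =>
    have h₁ := thetaSum_eq_linear_comb (c := fun m => (-1 : A) ^ (m + 1) * ↑(m + 1)) (a := -1)
      (b := -1) (c₁ := fun m => (-1) ^ m * m) (c₂ := fun m => (-1) ^ m)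
      (fun N m => s ^ jacobiExp N m) N (q := s ^ 2) fun m => by push_cast; ring
    have h₂ := thetaSum_eq_linear_comb (c := fun m => (-1 : A) ^ (m + 2) * ↑(m + 2)) (a := 1)
      (b := 2) (c₁ := fun m => (-1) ^ m * m) (c₂ := fun m => (-1) ^ m)
      (fun N m => s ^ jacobiExp N m) N (q := s ^ 2) fun m => by push_cast; ring
    obtain ⟨N, rfl⟩ : ∃ N', N = N' + 1 := ⟨N - 1, by omega⟩
    rw [thetaSum_jacobiExp_succ, h₁, h₂, ih, thetaSum_neg_one_pow_jacobiExp_eq_zero s hN,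
      Nat.add_sub_cancel, Nat.add_sub_cancel, qPochhammer_succ _ (N + 1), qPochhammer_succ _ N]
    ring

theorem thetaSum_neg_one_pow_gaussExp (N : ℕ) :
    thetaSum (s ^ 2) (fun m => (-1) ^ m) (fun N m => s ^ gaussExp N m) N
      = (-1) ^ N * (∏ i ∈ range N, (1 - s ^ (2 * i + 1))) ^ 2 := by
  induction N with
  | zero => simp [thetaSum, gaussExp]
  | succ N ih =>
    have h₁ := thetaSum_eq_linear_comb (c := fun m => (-1 : A) ^ (m + 1)) (a := -1) (b := 0)
      (c₁ := fun m => (-1) ^ m) (c₂ := fun m => (-1) ^ m) (fun N m => s ^ gaussExp N m) N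
      (q := s ^ 2) fun m => by ring
    have h₂ := thetaSum_eq_linear_comb (c := fun m => (-1 : A) ^ (m + 2)) (a := 1) (b := 0)
      (c₁ := fun m => (-1) ^ m) (c₂ := fun m => (-1) ^ m) (fun N m => s ^ gaussExp N m) N
      (q := s ^ 2) fun m => by ring
    rw [thetaSum_gaussExp_succ, h₁, h₂, ih, prod_range_succ]
    ring

end FiniteIdentities

section Nilpotent

variable {q : A} {M : ℕ}

lemma qPochhammer_eq_of_pow_eq_zero (hq : q ^ (M + 1) = 0) {t : ℕ} (ht : M ≤ t) :
    qPochhammer q t = qPochhammer q M := by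
  induction t, ht using Nat.le_induction with
  | base => rfl
  | succ t ht ih => rw [qPochhammer_succ, pow_eq_zero_of_le (by omega) hq, sub_zero, mul_one, ih]

lemma isUnit_qPochhammer (hq : IsNilpotent q) (n : ℕ) : IsUnit (qPochhammer q n) :=
  IsUnit.prod_iff.2 fun i _ => (hq.pow_succ i).isUnit_one_sub

lemma gaussBinom_mul_qPochhammer_sq (hq : q ^ (M + 1) = 0) {n m : ℕ} (hm : M ≤ m)
    (hmn : m + M ≤ n) : gaussBinom q n m * qPochhammer q M ^ 2 = qPochhammer q M := by
  have h := gaussBinom.mul_qPochhammer_mul_qPochhammer q (show m ≤ n by omega)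
  rw [qPochhammer_eq_of_pow_eq_zero hq hm, qPochhammer_eq_of_pow_eq_zero hq (t := n - m) (by omega),
    qPochhammer_eq_of_pow_eq_zero hq (t := n) (by omega)] at h
  linear_combination h

lemma qPochhammer_sq_mul_thetaSum (hq : q ^ (M + 1) = 0) (c : ℕ → A) {w : ℕ → ℕ → A} {N : ℕ}
    (hw : ∀ m, m < M ∨ 2 * N < m + M → w N m = 0) :
    qPochhammer q M ^ 2 * thetaSum q c w N
      = qPochhammer q M * ∑ m ∈ range (2 * N + 1), c m * w N m := by
  simp only [thetaSum, mul_sum]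
  refine sum_congr rfl fun m _ => ?_
  by_cases hm : m < M ∨ 2 * N < m + M
  · simp [hw m hm]
  · linear_combination c m * w N m
      * gaussBinom_mul_qPochhammer_sq hq (n := 2 * N) (m := m) (by omega) (by omega)

end Nilpotent

lemma le_jacobiExp {M N m : ℕ} (hN : 2 * M ≤ N) (hm : m < M ∨ 2 * N ≤ m + M) :
    M ≤ jacobiExp N m := by
  rw [← Nat.cast_le (α := ℤ), natCast_jacobiExp]
  rcases hm with hm | hm
  · have : (m : ℤ) - N ≤ -M - 1 := by omega
    nlinarith
  · have : (M : ℤ) ≤ (m : ℤ) - N := by omega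
    nlinarith

lemma le_gaussExp {M N m : ℕ} (hN : 2 * M ≤ N) (hm : m < M ∨ 2 * N ≤ m + M) :
    M ≤ gaussExp N m := by
  rw [← Nat.cast_le (α := ℤ), natCast_gaussExp]
  rcases hm with hm | hm
  · have : (m : ℤ) - N ≤ -M - 1 := by omega
    nlinarith
  · have : (M : ℤ) ≤ (m : ℤ) - N := by omega
    nlinarith

section Truncated

variable (s : A)

lemma sum_range_two_mul_neg_one_pow_mul_jacobiExp (N : ℕ) :
    ∑ m ∈ range (2 * N), (-1) ^ m * (m : A) * s ^ jacobiExp N m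
      = (-1) ^ N * ∑ j ∈ range N, (-1) ^ j * (2 * j + 1 : A) * s ^ (j * (j + 1)) := by
  rw [two_mul, sum_range_add, ← sum_range_reflect, ← sum_add_distrib, mul_sum]
  refine sum_congr rfl fun j hj => ?_
  obtain ⟨t, rfl⟩ : ∃ t, N = j + 1 + t := ⟨N - (j + 1), by simp at hj; omega⟩
  have e₁ : jacobiExp (j + 1 + t) (j + 1 + t - 1 - j) = j * (j + 1) := by
    apply Nat.cast_injective (R := ℤ)
    push_cast [natCast_jacobiExp, show j + 1 + t - 1 - j = t by omega]
    ring
  have e₂ : jacobiExp (j + 1 + t) (j + 1 + t + j) = j * (j + 1) := by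
    apply Nat.cast_injective (R := ℤ); push_cast [natCast_jacobiExp]; ring
  have hj : ((-1 : A) ^ j) ^ 2 = 1 := by rw [← pow_mul, pow_mul', neg_one_sq, one_pow]
  rw [e₁, e₂, show j + 1 + t - 1 - j = t by omega]
  push_cast
  simp only [pow_add, pow_one]
  linear_combination -(t : A) * (-1) ^ t * s ^ (j * (j + 1)) * hj

theorem qPochhammer_pow_three_eq_sum_of_pow_eq_zero {M : ℕ} (hs : s ^ M = 0) :
    qPochhammer (s ^ 2) M ^ 3
      = ∑ j ∈ range M, (-1) ^ j * (2 * j + 1 : A) * s ^ (j * (j + 1)) := by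
  -- any `N ≥ 2M` with `0 < N` works
  set N := 2 * M + 1
  have hq : (s ^ 2) ^ (M + 1) = 0 := by rw [← pow_mul]; exact pow_eq_zero_of_le (by omega) hs
  have hvanish : ∀ m, m < M ∨ 2 * N ≤ m + M → s ^ jacobiExp N m = 0 :=
    fun m hm => pow_eq_zero_of_le (le_jacobiExp (by omega) hm) hs
  have key := qPochhammer_sq_mul_thetaSum hq (fun m => (-1) ^ m * (m : A))
    (w := fun N m => s ^ jacobiExp N m) fun m hm => hvanish m (hm.imp_right le_of_lt)
  rw [thetaSum_neg_one_pow_mul_jacobiExp s (by omega),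
    qPochhammer_eq_of_pow_eq_zero hq (t := N) (by omega),
    qPochhammer_eq_of_pow_eq_zero hq (t := N - 1) (by omega), sum_range_succ,
    hvanish (2 * N) (by omega), mul_zero, add_zero, sum_range_two_mul_neg_one_pow_mul_jacobiExp,
    ← sum_subset (range_subset_range.2 (show M ≤ N by omega)) fun j _ hj =>
      by rw [pow_eq_zero_of_le (by simp at hj; nlinarith) hs, mul_zero]] at key
  have hN : (-1 : A) ^ N = -1 := by simp [N, pow_succ, pow_mul]
  rw [hN] at key
  refine (isUnit_qPochhammer ⟨M + 1, hq⟩ M).mul_left_cancel ?_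
  linear_combination -key

lemma sum_range_neg_one_pow_gaussExp (N : ℕ) :
    ∑ m ∈ range (2 * N + 1), (-1) ^ m * s ^ gaussExp N m
      = (-1) ^ N * ∑ k ∈ Icc (-N : ℤ) N, (-1) ^ k.natAbs * s ^ (k.natAbs ^ 2) := by
  rw [mul_sum]
  refine sum_nbij' (fun m => (m : ℤ) - N) (fun k => (k + N).toNat) (fun m hm => ?_)
    (fun k hk => ?_) (fun m _ => by omega) (fun k hk => by simp at hk; omega) fun m _ => ?_
  · simp at hm ⊢; omega
  · simp at hk ⊢; omega
  · rw [← mul_assoc, ← pow_add]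
    exact congrArg₂ _ (neg_one_pow_congr (by simp only [Nat.even_iff]; omega)) rfl

theorem sq_prod_mul_qPochhammer_eq_sum_of_pow_eq_zero {M : ℕ} (hs : s ^ M = 0) :
    (∏ i ∈ range M, (1 - s ^ (2 * i + 1))) ^ 2 * qPochhammer (s ^ 2) M
      = ∑ k ∈ Icc (-M : ℤ) M, (-1) ^ k.natAbs * s ^ (k.natAbs ^ 2) := by
  set N := 2 * M
  have hq : (s ^ 2) ^ (M + 1) = 0 := by rw [← pow_mul]; exact pow_eq_zero_of_le (by omega) hs
  have key := qPochhammer_sq_mul_thetaSum hq (fun m => (-1 : A) ^ m)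
    (w := fun N m => s ^ gaussExp N m) fun m hm =>
      pow_eq_zero_of_le (le_gaussExp le_rfl (hm.imp_right le_of_lt)) hs
  have hodd : ∏ i ∈ range N, (1 - s ^ (2 * i + 1)) = ∏ i ∈ range M, (1 - s ^ (2 * i + 1)) :=
    (prod_subset (range_subset_range.2 (by omega)) fun i _ hi => by
      rw [pow_eq_zero_of_le (by simp at hi; omega) hs, sub_zero]).symm
  have htail : ∑ k ∈ Icc (-N : ℤ) N, (-1) ^ k.natAbs * s ^ (k.natAbs ^ 2)
      = ∑ k ∈ Icc (-M : ℤ) M, (-1) ^ k.natAbs * s ^ (k.natAbs ^ 2) :=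
    (sum_subset (Icc_subset_Icc (by omega) (by omega)) fun k _ hk => by
      rw [pow_eq_zero_of_le (show M ≤ k.natAbs ^ 2 by
        have : M < k.natAbs := by simp at hk; omega
        nlinarith) hs, mul_zero]).symm
  have hN : (-1 : A) ^ N = 1 := by simp [N, pow_mul]
  rw [thetaSum_neg_one_pow_gaussExp, sum_range_neg_one_pow_gaussExp, hodd, htail, hN] at key
  refine (isUnit_qPochhammer ⟨M + 1, hq⟩ M).mul_left_cancel ?_
  linear_combination key

end Truncated

lemma qPochhammer_two_mul (s : A) (n : ℕ) :
    qPochhammer s (2 * n) = (∏ i ∈ range n, (1 - s ^ (2 * i + 1))) * qPochhammer (s ^ 2) n := by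
  induction n with
  | zero => simp [qPochhammer]
  | succ n ih =>
    rw [show 2 * (n + 1) = 2 * n + 1 + 1 by ring, qPochhammer_succ, qPochhammer_succ, ih,
      prod_range_succ, qPochhammer_succ, ← pow_mul]
    ring_nf

theorem prod_Icc_sq_mul_sq_eq_mul_sum_of_pow_eq_zero {s : A} {n : ℕ} (hs : s ^ (n + 1) = 0) :
    ∏ m ∈ Icc 1 n, ((1 - s ^ m) ^ 2 * (1 - s ^ (2 * m)) ^ 2)
      = (∑ j ∈ range (n + 1), (-1) ^ j * (2 * j + 1 : A) * s ^ (j * (j + 1)))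
        * ∑ k ∈ Icc (-(n + 1 : ℕ) : ℤ) (n + 1 : ℕ), (-1) ^ k.natAbs * s ^ (k.natAbs ^ 2) := by
  have hq : (s ^ 2) ^ (n + 1) = 0 := by rw [← pow_mul]; exact pow_eq_zero_of_le (by omega) hs
  have hprod : ∏ m ∈ Icc 1 n, ((1 - s ^ m) ^ 2 * (1 - s ^ (2 * m)) ^ 2)
      = qPochhammer s n ^ 2 * qPochhammer (s ^ 2) n ^ 2 := by
    rw [← Ico_add_one_right_eq_Icc, prod_Ico_eq_prod_range, prod_mul_distrib, prod_pow, prod_pow,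
      Nat.add_sub_cancel]
    simp only [qPochhammer, add_comm 1, pow_mul]
  rw [hprod, ← qPochhammer_eq_of_pow_eq_zero hs (t := 2 * (n + 1)) (by omega),
    ← qPochhammer_eq_of_pow_eq_zero hq (t := n + 1) (by omega), qPochhammer_two_mul,
    ← qPochhammer_pow_three_eq_sum_of_pow_eq_zero s hs,
    ← sq_prod_mul_qPochhammer_eq_sum_of_pow_eq_zero s hs]
  ring

section PowerSeries

open PowerSeries

lemma coeff_sum_C_mul_X_pow {ι : Type*} (s : Finset ι) (a : ι → A) (e : ι → ℕ) (n : ℕ) :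
    coeff n (∑ i ∈ s, C (a i) * X ^ e i) = ∑ i ∈ s with e i = n, a i := by
  simp [sum_filter, eq_comm]

lemma X_pow_dvd_prod_sub_mul_sum (n : ℕ) :
    (X : ℤ⟦X⟧) ^ (n + 1) ∣ ∏ m ∈ Icc 1 n, ((1 - X ^ (4 * m)) ^ 2 * (1 - X ^ (8 * m)) ^ 2)
      - (∑ j ∈ range (n + 1), C ((-1) ^ j * (2 * j + 1 : ℤ)) * X ^ (4 * (j * (j + 1))))
        * ∑ k ∈ Icc (-(n + 1 : ℕ) : ℤ) (n + 1 : ℕ),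
            C ((-1) ^ k.natAbs) * X ^ (4 * k.natAbs ^ 2) := by
  set π := Ideal.Quotient.mk (Ideal.span {(X : ℤ⟦X⟧) ^ (n + 1)})
  rw [← Ideal.mem_span_singleton, ← Ideal.Quotient.eq_zero_iff_mem, map_sub, sub_eq_zero]
  have hs : π (X ^ 4) ^ (n + 1) = 0 := by
    rw [← map_pow, Ideal.Quotient.eq_zero_iff_mem, Ideal.mem_span_singleton, ← pow_mul]
    exact pow_dvd_pow _ (by omega)
  convert prod_Icc_sq_mul_sq_eq_mul_sum_of_pow_eq_zero hs using 1
  · simp only [π, map_prod, map_mul, map_pow, map_sub, map_one, ← pow_mul, ← mul_assoc,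
      Nat.reduceMul]
  · simp [π, ← pow_mul, map_ofNat]

lemma coeff_X_mul_prod (n : ℕ) :
    coeff n ((X : ℤ⟦X⟧) * ∏ m ∈ Icc 1 n, ((1 - X ^ (4 * m)) ^ 2 * (1 - X ^ (8 * m)) ^ 2))
      = ∑ x ∈ range (n + 1) ×ˢ Icc (-(n + 1 : ℕ) : ℤ) (n + 1 : ℕ) with
          1 + 4 * (x.1 * (x.1 + 1)) + 4 * x.2.natAbs ^ 2 = n,
        (-1) ^ x.1 * (2 * x.1 + 1 : ℤ) * (-1) ^ x.2.natAbs := by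
  have h := mul_dvd_mul_left (X : ℤ⟦X⟧) (X_pow_dvd_prod_sub_mul_sum n)
  rw [← pow_succ', mul_sub] at h
  have hcoeff := X_pow_dvd_iff.1 h n (by omega)
  rw [map_sub, sub_eq_zero] at hcoeff
  rw [hcoeff, sum_mul_sum, ← sum_product', mul_sum, ← coeff_sum_C_mul_X_pow]
  refine congrArg _ (sum_congr rfl fun x _ => ?_)
  simp only [map_mul, pow_add, pow_one]
  ring

end PowerSeries

noncomputable def primaryPairsOfNorm (n : ℕ) : Finset (ℤ × ℤ) :=
  (Icc (-(n : ℤ)) n ×ˢ Icc (-(n : ℤ)) n).filter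
    fun p => IsPrimaryPair p.1 p.2 ∧ p.1 ^ 2 + p.2 ^ 2 = (n : ℤ)

lemma mem_primaryPairsOfNorm {n : ℕ} {p : ℤ × ℤ} :
    p ∈ primaryPairsOfNorm n ↔ (-(n : ℤ) ≤ p.1 ∧ p.1 ≤ n) ∧ (-(n : ℤ) ≤ p.2 ∧ p.2 ≤ n)
      ∧ (p.2 % 4 = 0 ∧ p.1 % 4 = 1 ∨ p.2 % 4 = 2 ∧ p.1 % 4 = 3) ∧ p.1 ^ 2 + p.2 ^ 2 = n := by
  simp only [primaryPairsOfNorm, mem_filter, mem_product, mem_Icc]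
  unfold IsPrimaryPair Int.ModEq
  simp only [Int.reduceMod, and_assoc]

lemma sum_snd_primaryPairsOfNorm (n : ℕ) : ∑ p ∈ primaryPairsOfNorm n, p.2 = 0 := by
  refine sum_involution (fun p _ => (p.1, -p.2)) (fun p _ => add_neg_cancel _)
    (fun p _ hp h => hp (by simp only [Prod.ext_iff] at h; omega)) (fun p hp => ?_)
    fun p _ => by simp
  simp only [mem_primaryPairsOfNorm, neg_sq] at hp ⊢
  omega

lemma sum_fst_primaryPairsOfNorm (n : ℕ) :
    ∑ p ∈ primaryPairsOfNorm n, p.1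
      = ∑ x ∈ range (n + 1) ×ˢ Icc (-(n + 1 : ℕ) : ℤ) (n + 1 : ℕ) with
          1 + 4 * (x.1 * (x.1 + 1)) + 4 * x.2.natAbs ^ 2 = n,
        (-1) ^ x.1 * (2 * x.1 + 1 : ℤ) * (-1) ^ x.2.natAbs := by
  symm
  refine sum_nbij' (fun x => ((-1) ^ (x.1 + x.2.natAbs) * (2 * x.1 + 1), 2 * x.2))
    (fun p => (p.1.natAbs / 2, p.2 / 2)) (fun x hx => ?_) (fun p hp => ?_) (fun x hx => ?_)
    (fun p hp => ?_) fun x _ => by simp only [pow_add]; ring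
  · obtain ⟨j, k⟩ := x
    simp only [mem_filter, mem_product, mem_range, mem_Icc] at hx
    have hn : (n : ℤ) = (2 * j + 1) ^ 2 + (2 * k) ^ 2 := by
      rw [← hx.2]; push_cast [sq_abs]; ring
    simp only [mem_primaryPairsOfNorm, neg_one_pow_eq_ite, Nat.even_iff]
    split_ifs with hpar <;>
    · refine ⟨⟨by nlinarith, by nlinarith⟩, ⟨by nlinarith, by nlinarith⟩, by omega,
        by linear_combination hn.symm⟩
  · obtain ⟨a, b⟩ := p
    simp only [mem_primaryPairsOfNorm] at hp
    simp only [mem_filter, mem_product, mem_range, mem_Icc]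
    refine ⟨⟨by omega, by omega, by omega⟩, ?_⟩
    set j := a.natAbs / 2
    have ha : a ^ 2 = (2 * j + 1) ^ 2 := by
      rcases (show a = 2 * j + 1 ∨ a = -(2 * j + 1) by omega) with h | h
      · linear_combination (a + 2 * j + 1) * h
      · linear_combination (a - 2 * j - 1) * h
    have hb : b = 2 * (b / 2) := by omega
    apply Nat.cast_injective (R := ℤ)
    push_cast [sq_abs]
    linear_combination hp.2.2.2 - ha - (b + 2 * (b / 2)) * hb
  · obtain ⟨j, k⟩ := x
    simp only [neg_one_pow_eq_ite, Nat.even_iff, Prod.mk.injEq]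
    split_ifs <;> omega
  · obtain ⟨a, b⟩ := p
    simp only [mem_primaryPairsOfNorm] at hp
    simp only [neg_one_pow_eq_ite, Nat.even_iff, Prod.mk.injEq]
    split_ifs <;> omega

/-- The infinite product is truncated at `m = n`, and the pairs are restricted to the box
`|a|, |b| ≤ n`; neither changes the coefficient of `X^n`. -/
theorem eta4sq_eta8sq_coeff_eq_sum_general (n : ℕ) :
    ((PowerSeries.coeff n
      ((PowerSeries.X : PowerSeries ℤ) *
        ∏ m ∈ Finset.Icc 1 n,
          ((1 - (PowerSeries.X : PowerSeries ℤ) ^ (4 * m)) ^ 2 *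
            (1 - (PowerSeries.X : PowerSeries ℤ) ^ (8 * m)) ^ 2)) : ℤ) : ℂ) =
    ∑ p ∈ (Finset.Icc (-(n : ℤ)) (n : ℤ) ×ˢ Finset.Icc (-(n : ℤ)) (n : ℤ)).filter
        (fun p => IsPrimaryPair p.1 p.2 ∧ p.1 ^ 2 + p.2 ^ 2 = (n : ℤ)),
      ((p.1 : ℂ) + (p.2 : ℂ) * Complex.I) := by
  change _ = ∑ p ∈ primaryPairsOfNorm n, ((p.1 : ℂ) + (p.2 : ℂ) * Complex.I)
  rw [sum_add_distrib, ← sum_mul, ← Int.cast_sum, ← Int.cast_sum, sum_snd_primaryPairsOfNorm,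
    sum_fst_primaryPairsOfNorm, coeff_X_mul_prod]
  simp

/-- The coefficient of `X^n` in the q-expansion of `η(4z)^2 η(8z)^2`, i.e. in
`X ∏_{m=1}^∞ (1 - X^{4m})^2 (1 - X^{8m})^2` (truncated at `m = n`, which does not
change the coefficient of `X^n`), equals `Σ (a + bi)` over primary pairs `(a, b)`
with `a² + b² = n`.  All such pairs satisfy `|a|, |b| ≤ n`. -/
theorem eta4sq_eta8sq_coeff_eq_sum (n : ℕ) (hn : 1 ≤ n) :
    ((PowerSeries.coeff n
      ((PowerSeries.X : PowerSeries ℤ) *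
        ∏ m ∈ Finset.Icc 1 n,
          ((1 - (PowerSeries.X : PowerSeries ℤ) ^ (4 * m)) ^ 2 *
            (1 - (PowerSeries.X : PowerSeries ℤ) ^ (8 * m)) ^ 2)) : ℤ) : ℂ) =
    ∑ p ∈ (Finset.Icc (-(n : ℤ)) (n : ℤ) ×ˢ Finset.Icc (-(n : ℤ)) (n : ℤ)).filter
        (fun p => IsPrimaryPair p.1 p.2 ∧ p.1 ^ 2 + p.2 ^ 2 = (n : ℤ)),
      ((p.1 : ℂ) + (p.2 : ℂ) * Complex.I) :=
  eta4sq_eta8sq_coeff_eq_sum_general n
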